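/- arXiv:1709.10003 — 8 statements merged into one kernel-verified Lean document; each statement's English description precedes it below -/
import Mathlib

section
/- For every integer n ≥ 0, it holds that ∑_{k=0}^{n} C(n,k) · B(1/2 + k, 1/2 + n − k) = π, where C(n,k) is the binomial coefficient. -/
/-- Euler beta function `B(x,y) = Γ(x)Γ(y)/Γ(x+y)`. -/
noncomputable def eulerBeta (x y : ℝ) : ℝ :=
  Real.Gamma x * Real.Gamma y / Real.Gamma (x + y)

lemma eulerBeta_rec {x y : ℝ} (hx : 0 < x) (hy : 0 < y) :
    eulerBeta (x + 1) y + eulerBeta x (y + 1) = eulerBeta x y := by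
  have hxy : 0 < x + y := by linarith
  have hG : Real.Gamma (x + y) ≠ 0 := (Real.Gamma_pos_of_pos hxy).ne'
  unfold eulerBeta
  rw [Real.Gamma_add_one hx.ne', Real.Gamma_add_one hy.ne']
  have h1 : x + 1 + y = x + y + 1 := by ring
  have h2 : x + (y + 1) = x + y + 1 := by ring
  rw [h1, h2, Real.Gamma_add_one hxy.ne']
  field_simp

theorem sum_choose_beta_half_eq_pi (n : ℕ) :
    ∑ k ∈ Finset.range (n + 1),
      (n.choose k : ℝ) * eulerBeta (1 / 2 + k) (1 / 2 + (n - k : ℕ)) = Real.pi := by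
  induction n with
  | zero =>
    rw [Finset.sum_range_one]
    norm_num [eulerBeta, Real.Gamma_one_half_eq, Real.Gamma_one]
    exact Real.mul_self_sqrt Real.pi_pos.le
  | succ n ih =>
    have key : ∑ k ∈ Finset.range (n + 1 + 1),
        (Nat.choose (n + 1) k : ℝ) * eulerBeta (1 / 2 + k) (1 / 2 + ((n + 1) - k : ℕ))
        = ∑ k ∈ Finset.range (n + 1), (n.choose k : ℝ) *
            eulerBeta (1 / 2 + (k : ℝ) + 1) (1 / 2 + ((n - k : ℕ) : ℝ))
          + ∑ k ∈ Finset.range (n + 1), (n.choose k : ℝ) *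
            eulerBeta (1 / 2 + (k : ℝ)) (1 / 2 + ((n - k : ℕ) : ℝ) + 1) := by
      rw [Finset.sum_range_succ' _ (n + 1)]
      have hsplit : ∀ k ∈ Finset.range (n + 1),
          ((n + 1).choose (k + 1) : ℝ) *
            eulerBeta (1 / 2 + ((k + 1 : ℕ) : ℝ)) (1 / 2 + (((n + 1) - (k + 1) : ℕ) : ℝ))
          = (n.choose k : ℝ) * eulerBeta (1 / 2 + (k : ℝ) + 1) (1 / 2 + ((n - k : ℕ) : ℝ))
            + (n.choose (k + 1) : ℝ) *
              eulerBeta (1 / 2 + ((k + 1 : ℕ) : ℝ)) (1 / 2 + ((n - (k + 1) : ℕ) : ℝ) + 1) := by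
        intro k hk
        have hk' : k ≤ n := Nat.lt_succ_iff.mp (Finset.mem_range.mp hk)
        rw [show (n + 1) - (k + 1) = n - k from by omega, Nat.choose_succ_succ,
          Nat.cast_add, add_mul]
        congr 1
        · congr 2
          push_cast; ring
        · by_cases hkn : k + 1 ≤ n
          · rw [show n - k = (n - (k + 1)) + 1 from by omega]
            congr 2
            push_cast; ring
          · have h2 : k = n := by omega
            subst h2
            simp [Nat.choose_succ_self]
      rw [Finset.sum_congr rfl hsplit, Finset.sum_add_distrib, add_assoc]
      congr 1
      -- leftover: shifted sum + first term = full second sum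
      have hzero : (n.choose (n + 1) : ℝ) *
          eulerBeta (1 / 2 + ((n + 1 + 1 : ℕ) : ℝ)) (1 / 2 + ((n - (n + 1 + 1 - 1) : ℕ) : ℝ) + 1) = 0 := by
        simp [Nat.choose_succ_self]
      have hrhs := Finset.sum_range_succ' (fun k => (n.choose k : ℝ) *
          eulerBeta (1 / 2 + (k : ℝ)) (1 / 2 + ((n - k : ℕ) : ℝ) + 1)) n
      rw [hrhs, Finset.sum_range_succ]
      simp only [Nat.choose_succ_self, Nat.cast_zero, zero_mul, add_zero]
      simp only [Nat.choose_zero_right, Nat.cast_one, one_mul, Nat.sub_zero,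
        Nat.cast_zero, add_zero]
      congr 1
      push_cast; ring
    rw [key, ← Finset.sum_add_distrib, ← ih]
    apply Finset.sum_congr rfl
    intro k hk
    rw [← mul_add]
    congr 1
    have hx : (0 : ℝ) < 1 / 2 + (k : ℝ) := by positivity
    have hy : (0 : ℝ) < 1 / 2 + ((n - k : ℕ) : ℝ) := by positivity
    exact eulerBeta_rec hx hy
end

section
/- For every real number s > 0 and every integer n ≥ 0, it holds that ∑_{j=0}^{n} ∑_{i=0}^{j} (−1)^j · C(n,j) · B(j+1, s)/(s + i) = 1/(s + n)², where C(n,j) is the binomial coefficient. -/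
noncomputable def bb (j : ℕ) (s : ℝ) : ℝ :=
  (j.factorial : ℝ) / ∏ i ∈ Finset.range (j + 1), (s + i)

noncomputable def cc (j : ℕ) (s : ℝ) : ℝ :=
  ∑ i ∈ Finset.range (j + 1), 1 / (s + i)

lemma prod_pos_lem (s : ℝ) (hs : 0 < s) (m : ℕ) :
    0 < ∏ i ∈ Finset.range m, (s + i) := by
  apply Finset.prod_pos
  intro i _
  positivity

lemma gamma_add_nat (s : ℝ) (hs : 0 < s) (m : ℕ) :
    Real.Gamma (s + m) = Real.Gamma s * ∏ i ∈ Finset.range m, (s + i) := by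
  induction m with
  | zero => simp
  | succ m ih =>
    have h1 : s + ((m + 1 : ℕ) : ℝ) = (s + m) + 1 := by push_cast; ring
    have h2 : (s + (m : ℝ)) ≠ 0 := by positivity
    rw [h1, Real.Gamma_add_one h2, ih, Finset.prod_range_succ]
    ring

lemma beta_eq (s : ℝ) (hs : 0 < s) (j : ℕ) :
    eulerBeta ((j : ℝ) + 1) s = bb j s := by
  have h1 : ((j : ℝ) + 1) + s = s + ((j + 1 : ℕ) : ℝ) := by push_cast; ring
  have h2 : Real.Gamma ((j : ℝ) + 1) = (j.factorial : ℝ) := by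
    exact_mod_cast Real.Gamma_nat_eq_factorial j
  have hG : Real.Gamma s ≠ 0 := (Real.Gamma_pos_of_pos hs).ne'
  have hP : (∏ i ∈ Finset.range (j + 1), (s + i)) ≠ 0 := (prod_pos_lem s hs _).ne'
  rw [eulerBeta, h1, gamma_add_nat s hs, h2, bb]
  field_simp

lemma bb_succ (s : ℝ) (hs : 0 < s) (j : ℕ) :
    bb (j + 1) s * (s + (j : ℝ) + 1) = bb j s * ((j : ℝ) + 1) := by
  have hP : (∏ i ∈ Finset.range (j + 1), (s + i)) ≠ 0 := (prod_pos_lem s hs _).ne'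
  have hsj : (s + (j : ℝ) + 1) ≠ 0 := by positivity
  rw [bb, bb, Finset.prod_range_succ, Nat.factorial_succ]
  push_cast
  field_simp
  ring

lemma bb_shift (s : ℝ) (hs : 0 < s) (j : ℕ) :
    bb j (s + 1) = bb j s - bb (j + 1) s := by
  have hP : (∏ i ∈ Finset.range (j + 1), (s + (i : ℝ))) ≠ 0 := (prod_pos_lem s hs _).ne'
  have hsj : (s + (j : ℝ) + 1) ≠ 0 := by positivity
  have hs0 : s ≠ 0 := hs.ne'
  have hQ : (∏ i ∈ Finset.range (j + 1), (s + 1 + (i : ℝ))) ≠ 0 := by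
    have := prod_pos_lem (s + 1) (by linarith) (j + 1)
    exact this.ne'
  have hprod : (∏ i ∈ Finset.range (j + 1), (s + 1 + (i : ℝ))) * s
      = (∏ i ∈ Finset.range (j + 1), (s + (i : ℝ))) * (s + (j : ℝ) + 1) := by
    have h0 := Finset.prod_range_succ' (fun i => s + (i : ℝ)) (j + 1)
    have h2 := Finset.prod_range_succ (fun i => s + (i : ℝ)) (j + 1)
    have h1 : (∏ i ∈ Finset.range (j + 1), (s + ((i : ℕ) + 1 : ℕ) : ℝ))
        = ∏ i ∈ Finset.range (j + 1), (s + 1 + (i : ℝ)) := by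
      apply Finset.prod_congr rfl; intro i _; push_cast; ring
    rw [h2, h1] at h0
    push_cast at h0 ⊢
    linear_combination -h0
  have e1 : bb j (s + 1) = (j.factorial : ℝ) * s
      / ((∏ i ∈ Finset.range (j + 1), (s + (i : ℝ))) * (s + (j : ℝ) + 1)) := by
    rw [bb, div_eq_div_iff hQ (mul_ne_zero hP hsj)]
    linear_combination -(j.factorial : ℝ) * hprod
  have e2 : bb j s - bb (j + 1) s = (j.factorial : ℝ) * s
      / ((∏ i ∈ Finset.range (j + 1), (s + (i : ℝ))) * (s + (j : ℝ) + 1)) := by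
    rw [bb, bb, Nat.factorial_succ,
      show (∏ i ∈ Finset.range (j + 1 + 1), (s + (i : ℝ)))
        = (∏ i ∈ Finset.range (j + 1), (s + (i : ℝ))) * (s + ((j + 1 : ℕ) : ℝ)) from
        Finset.prod_range_succ _ _,
      show (s + ((j + 1 : ℕ) : ℝ)) = s + (j : ℝ) + 1 by push_cast; ring]
    rw [div_sub_div _ _ hP (mul_ne_zero hP hsj)]
    push_cast
    rw [div_eq_div_iff (mul_ne_zero hP (mul_ne_zero hP hsj)) (mul_ne_zero hP hsj)]
    ring
  rw [e1, e2]

lemma cc_succ (s : ℝ) (j : ℕ) :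
    cc (j + 1) s = cc j s + 1 / (s + (j : ℝ) + 1) := by
  rw [cc, cc, Finset.sum_range_succ]
  push_cast [add_assoc]
  norm_num

lemma cc_shift (s : ℝ) (j : ℕ) :
    cc j (s + 1) = cc (j + 1) s - 1 / s := by
  rw [cc, cc]
  have h0 : ∑ i ∈ Finset.range (j + 2), 1 / (s + (i : ℝ))
      = (∑ i ∈ Finset.range (j + 1), 1 / (s + (((i : ℕ) + 1 : ℕ) : ℝ))) + 1 / (s + ((0 : ℕ) : ℝ)) :=
    Finset.sum_range_succ' (fun i => 1 / (s + (i : ℝ))) (j + 1)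
  have h1 : (∑ i ∈ Finset.range (j + 1), 1 / (s + (((i : ℕ) + 1 : ℕ) : ℝ)))
      = ∑ i ∈ Finset.range (j + 1), 1 / (s + 1 + (i : ℝ)) := by
    apply Finset.sum_congr rfl; intro i _; push_cast; ring_nf
  rw [h0, h1]
  simp

lemma key (s : ℝ) (hs : 0 < s) (j : ℕ) :
    bb j s * cc j s - bb (j + 1) s * cc (j + 1) s = bb j (s + 1) * cc j (s + 1) := by
  have h4 := bb_succ s hs j
  rw [bb_shift s hs j, cc_shift, cc_succ]
  set x := bb j s
  set x' := bb (j + 1) s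
  set y := cc j s
  have hsj : (s + (j : ℝ) + 1) ≠ 0 := by positivity
  have hs0 : s ≠ 0 := hs.ne'
  field_simp
  ring_nf
  nlinarith [h4, sq_nonneg s]

lemma sum_pascal (f : ℕ → ℝ) (n : ℕ) :
    ∑ j ∈ Finset.range (n + 2), (-1 : ℝ) ^ j * ((n + 1).choose j : ℝ) * f j
    = ∑ j ∈ Finset.range (n + 1), (-1 : ℝ) ^ j * (n.choose j : ℝ) * (f j - f (j + 1)) := by
  have hL : ∑ j ∈ Finset.range (n + 2), (-1 : ℝ) ^ j * ((n + 1).choose j : ℝ) * f j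
      = (∑ j ∈ Finset.range (n + 1), (-1 : ℝ) ^ (j + 1) * ((n + 1).choose (j + 1) : ℝ) * f (j + 1))
        + f 0 := by
    rw [Finset.sum_range_succ' (fun j => (-1 : ℝ) ^ j * ((n + 1).choose j : ℝ) * f j) (n + 1)]
    simp
  have hsplit : ∀ j, ((n + 1).choose (j + 1) : ℝ) = (n.choose j : ℝ) + (n.choose (j + 1) : ℝ) := by
    intro j; exact_mod_cast congrArg (Nat.cast (R := ℝ)) (Nat.choose_succ_succ n j)
  have hT2 : ∑ j ∈ Finset.range (n + 1), (-1 : ℝ) ^ (j + 1) * (n.choose (j + 1) : ℝ) * f (j + 1)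
      = (∑ j ∈ Finset.range (n + 2), (-1 : ℝ) ^ j * (n.choose j : ℝ) * f j) - f 0 := by
    rw [Finset.sum_range_succ' (fun j => (-1 : ℝ) ^ j * (n.choose j : ℝ) * f j) (n + 1)]
    simp
  have hT2' : ∑ j ∈ Finset.range (n + 2), (-1 : ℝ) ^ j * (n.choose j : ℝ) * f j
      = ∑ j ∈ Finset.range (n + 1), (-1 : ℝ) ^ j * (n.choose j : ℝ) * f j := by
    rw [Finset.sum_range_succ]
    simp [Nat.choose_succ_self]
  rw [hL]
  have hc : ∀ j ∈ Finset.range (n + 1), (-1 : ℝ) ^ (j + 1) * ((n + 1).choose (j + 1) : ℝ) * f (j + 1)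
      = (-1 : ℝ) ^ (j + 1) * (n.choose j : ℝ) * f (j + 1)
        + (-1 : ℝ) ^ (j + 1) * (n.choose (j + 1) : ℝ) * f (j + 1) := by
    intro j _; rw [hsplit]; ring
  rw [Finset.sum_congr rfl hc, Finset.sum_add_distrib, hT2, hT2']
  rw [show ∀ (a b c : ℝ), a + (b - c) + c = b + a from fun a b c => by ring]
  rw [← Finset.sum_add_distrib]
  apply Finset.sum_congr rfl
  intro j _
  ring

lemma main_lemma (n : ℕ) : ∀ s : ℝ, 0 < s →
    ∑ j ∈ Finset.range (n + 1), (-1 : ℝ) ^ j * (n.choose j : ℝ) * (bb j s * cc j s)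
    = 1 / (s + n) ^ 2 := by
  induction n with
  | zero =>
    intro s hs
    have hs0 : s ≠ 0 := hs.ne'
    simp only [zero_add, Finset.sum_range_one, pow_zero, Nat.choose_self, Nat.cast_one, one_mul,
      Nat.cast_zero, add_zero, bb, cc, Finset.prod_range_one, Nat.factorial_zero]
    rw [sq]
    field_simp
  | succ n ih =>
    intro s hs
    rw [sum_pascal (fun j => bb j s * cc j s) n]
    have hc : ∀ j ∈ Finset.range (n + 1),
        (-1 : ℝ) ^ j * (n.choose j : ℝ) * (bb j s * cc j s - bb (j + 1) s * cc (j + 1) s)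
        = (-1 : ℝ) ^ j * (n.choose j : ℝ) * (bb j (s + 1) * cc j (s + 1)) := by
      intro j _; rw [key s hs j]
    rw [Finset.sum_congr rfl hc, ih (s + 1) (by linarith)]
    have : s + 1 + (n : ℝ) = s + ((n + 1 : ℕ) : ℝ) := by push_cast; ring
    rw [this]

theorem double_sum_choose_beta (s : ℝ) (hs : 0 < s) (n : ℕ) :
    ∑ j ∈ Finset.range (n + 1), ∑ i ∈ Finset.range (j + 1),
      (-1 : ℝ) ^ j * (n.choose j : ℝ) * eulerBeta (j + 1) s / (s + i) =
      1 / (s + n) ^ 2 := by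
  have h : ∀ j ∈ Finset.range (n + 1),
      ∑ i ∈ Finset.range (j + 1), (-1 : ℝ) ^ j * (n.choose j : ℝ) * eulerBeta ((j : ℝ) + 1) s / (s + i)
      = (-1 : ℝ) ^ j * (n.choose j : ℝ) * (bb j s * cc j s) := by
    intro j _
    rw [cc, Finset.mul_sum, Finset.mul_sum]
    apply Finset.sum_congr rfl
    intro i _
    rw [beta_eq s hs j]
    ring
  rw [Finset.sum_congr rfl h, main_lemma n s hs]
end

section
/- Let p > 0 be a real number and n ≥ 1 an integer. Then ∑_{k=0}^{n} (−1)^k · C(n,k) · B(p + k, p + n − k) equals n! · Γ(p) · Γ(p + n/2) / (Γ(n/2 + 1) · Γ(2p + n)) if n is even, and equals 0 if n is odd. Here C(n,k) is the binomial coefficient. -/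
private noncomputable def Pp (p : ℝ) (k : ℕ) : ℝ := ∏ j ∈ Finset.range k, (p + j)

private noncomputable def Fp (p : ℝ) (n : ℕ) : ℝ :=
  ∑ k ∈ Finset.range (n + 1), (-1 : ℝ) ^ k * (n.choose k : ℝ) * Pp p k * Pp p (n - k)

private lemma Pp_succ (p : ℝ) (k : ℕ) : Pp p (k + 1) = Pp p k * (p + k) := by
  simp [Pp, Finset.prod_range_succ]

private lemma choose_sub_mul {n k : ℕ} (hk : k ≤ n) :
    (n + 1 - k) * (n + 1).choose k = (n + 1) * n.choose k := by
  have h1 := Nat.add_one_mul_choose_eq n (n - k)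
  rw [Nat.choose_symm hk] at h1
  have h2 : n - k + 1 = n + 1 - k := by omega
  rw [h2] at h1
  have h3 : (n + 1).choose (n + 1 - k) = (n + 1).choose k := Nat.choose_symm (by omega)
  rw [h3] at h1
  calc (n + 1 - k) * (n + 1).choose k = (n + 1).choose k * (n + 1 - k) := Nat.mul_comm _ _
    _ = (n + 1) * n.choose k := h1.symm

/-- `F(n+1) = G(n)` where `G n = ∑ (-1)^k C(n,k) P k P (n-k) (n - 2k)`. -/
private lemma Fp_succ_eq (p : ℝ) (n : ℕ) :
    Fp p (n + 1) = ∑ k ∈ Finset.range (n + 1),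
      (-1 : ℝ) ^ k * (n.choose k : ℝ) * Pp p k * Pp p (n - k) * ((n : ℝ) - 2 * k) := by
  have hsplit : ∀ k ∈ Finset.range (n + 1),
      (-1 : ℝ) ^ k * (n.choose k : ℝ) * Pp p k * Pp p (n - k) * ((n : ℝ) - 2 * k) =
      (-1 : ℝ) ^ k * (n.choose k : ℝ) * Pp p k * Pp p (n + 1 - k) +
      (-1 : ℝ) ^ (k + 1) * (n.choose k : ℝ) * Pp p (k + 1) * Pp p (n - k) := by
    intro k hk
    have hk' : k ≤ n := by simpa using Nat.lt_succ_iff.mp (Finset.mem_range.mp hk)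
    have h1 : Pp p (n + 1 - k) = Pp p (n - k) * (p + (n - k : ℕ)) := by
      have h : n + 1 - k = (n - k) + 1 := by omega
      rw [h, Pp_succ]
    have hc : ((n - k : ℕ) : ℝ) = (n : ℝ) - k := by
      rw [Nat.cast_sub hk']
    rw [h1, hc, Pp_succ, pow_succ]
    ring
  rw [Finset.sum_congr rfl hsplit, Finset.sum_add_distrib]
  -- LHS: Fp p (n+1) as sum over range (n+2)
  rw [Fp, Finset.sum_range_succ']
  have hg : ∀ i, (-1 : ℝ) ^ (i + 1) * ((n + 1).choose (i + 1) : ℝ) * Pp p (i + 1) *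
      Pp p (n + 1 - (i + 1)) =
      (-1 : ℝ) ^ (i + 1) * (n.choose i : ℝ) * Pp p (i + 1) * Pp p (n - i) +
      (-1 : ℝ) ^ (i + 1) * (n.choose (i + 1) : ℝ) * Pp p (i + 1) * Pp p (n - i) := by
    intro i
    have h : n + 1 - (i + 1) = n - i := by omega
    rw [h, Nat.choose_succ_succ]
    push_cast
    ring
  rw [Finset.sum_congr rfl (fun i _ => hg i), Finset.sum_add_distrib]
  -- now rearrange: A-part equals first+the extra sum
  have hA : ∑ k ∈ Finset.range (n + 1),
      (-1 : ℝ) ^ k * (n.choose k : ℝ) * Pp p k * Pp p (n + 1 - k) =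
      (∑ i ∈ Finset.range (n + 1),
        (-1 : ℝ) ^ (i + 1) * (n.choose (i + 1) : ℝ) * Pp p (i + 1) * Pp p (n - i)) +
      (-1 : ℝ) ^ 0 * ((n + 1).choose 0 : ℝ) * Pp p 0 * Pp p (n + 1 - 0) := by
    rw [Finset.sum_range_succ']
    congr 1
    · rw [Finset.sum_range_succ]
      simp only [Nat.choose_succ_self, Nat.cast_zero]
      rw [Finset.sum_congr rfl (fun i hi => by
        have h : n + 1 - (i + 1) = n - i := by omega
        rw [h])]
      simp
    · simp
  rw [hA]
  ring

private lemma Fp_rec (p : ℝ) (n : ℕ) :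
    Fp p (n + 2) = ((n : ℝ) + 1) * (2 * p + n) * Fp p n := by
  have h := Fp_succ_eq p (n + 1)
  rw [show n + 1 + 1 = n + 2 from rfl] at h
  rw [h]
  have hsplit : ∀ k ∈ Finset.range (n + 2),
      (-1 : ℝ) ^ k * ((n + 1).choose k : ℝ) * Pp p k * Pp p (n + 1 - k) *
        ((↑(n + 1) : ℝ) - 2 * k) =
      (-1 : ℝ) ^ k * ((n + 1).choose k : ℝ) * Pp p k * Pp p (n + 1 - k) * (((n : ℝ) + 1) - k)
      - (-1 : ℝ) ^ k * ((n + 1).choose k : ℝ) * Pp p k * Pp p (n + 1 - k) * k := by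
    intro k _; push_cast; ring
  rw [Finset.sum_congr rfl hsplit, Finset.sum_sub_distrib]
  have hS1 : ∑ k ∈ Finset.range (n + 2),
      (-1 : ℝ) ^ k * ((n + 1).choose k : ℝ) * Pp p k * Pp p (n + 1 - k) * (((n : ℝ) + 1) - k) =
      ∑ k ∈ Finset.range (n + 1), ((n : ℝ) + 1) *
        ((-1 : ℝ) ^ k * (n.choose k : ℝ) * Pp p k * Pp p (n - k) * (p + ((n : ℝ) - k))) := by
    rw [Finset.sum_range_succ]
    have hlast : (-1 : ℝ) ^ (n + 1) * ((n + 1).choose (n + 1) : ℝ) * Pp p (n + 1) *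
        Pp p (n + 1 - (n + 1)) * (((n : ℝ) + 1) - (↑(n + 1) : ℝ)) = 0 := by
      push_cast; ring
    rw [hlast, add_zero]
    refine Finset.sum_congr rfl ?_
    intro k hk
    have hk' : k ≤ n := Nat.lt_succ_iff.mp (Finset.mem_range.mp hk)
    have hcast : ((n : ℝ) + 1) - k = ((n + 1 - k : ℕ) : ℝ) := by
      rw [Nat.cast_sub (by omega)]; push_cast; ring
    have hch : ((n + 1 - k : ℕ) : ℝ) * ((n + 1).choose k : ℝ) =
        ((n : ℝ) + 1) * (n.choose k : ℝ) := by
      exact_mod_cast congrArg (Nat.cast (R := ℝ)) (choose_sub_mul hk')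
    have hP : Pp p (n + 1 - k) = Pp p (n - k) * (p + ((n : ℝ) - k)) := by
      rw [show n + 1 - k = (n - k) + 1 by omega, Pp_succ, Nat.cast_sub hk']
    rw [hP, hcast]
    linear_combination ((-1 : ℝ) ^ k * Pp p k * Pp p (n - k) * (p + ((n : ℝ) - k))) * hch
  have hS2 : ∑ k ∈ Finset.range (n + 2),
      (-1 : ℝ) ^ k * ((n + 1).choose k : ℝ) * Pp p k * Pp p (n + 1 - k) * k =
      ∑ k ∈ Finset.range (n + 1), (-(((n : ℝ) + 1)) *
        ((-1 : ℝ) ^ k * (n.choose k : ℝ) * Pp p k * Pp p (n - k) * (p + k))) := by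
    rw [Finset.sum_range_succ']
    have hfirst : (-1 : ℝ) ^ 0 * ((n + 1).choose 0 : ℝ) * Pp p 0 * Pp p (n + 1 - 0) *
        ((0 : ℕ) : ℝ) = 0 := by
      norm_num
    rw [hfirst, add_zero]
    refine Finset.sum_congr rfl ?_
    intro i hi
    have hh : n + 1 - (i + 1) = n - i := by omega
    have hch2 : ((n + 1).choose (i + 1) : ℝ) * ((i : ℝ) + 1) =
        ((n : ℝ) + 1) * (n.choose i : ℝ) := by
      have := (Nat.add_one_mul_choose_eq n i).symm
      exact_mod_cast congrArg (Nat.cast (R := ℝ)) this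
    rw [hh, Pp_succ]
    push_cast
    linear_combination ((-1 : ℝ) ^ (i + 1) * Pp p i * Pp p (n - i) * (p + (i : ℝ))) * hch2
  rw [hS1, hS2, ← Finset.sum_sub_distrib, Fp, Finset.mul_sum]
  refine Finset.sum_congr rfl ?_
  intro k hk
  ring

private lemma Fp_zero (p : ℝ) : Fp p 0 = 1 := by
  simp [Fp, Pp]

private lemma Fp_one (p : ℝ) : Fp p 1 = 0 := by
  simp [Fp, Finset.sum_range_succ, Pp, Finset.prod_range_succ]

private lemma Fp_odd (p : ℝ) (m : ℕ) : Fp p (2 * m + 1) = 0 := by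
  induction m with
  | zero => simpa using Fp_one p
  | succ m ih =>
    have h : 2 * (m + 1) + 1 = (2 * m + 1) + 2 := by ring
    rw [h, Fp_rec, ih, mul_zero]

private lemma Fp_even (p : ℝ) (m : ℕ) :
    (m.factorial : ℝ) * Fp p (2 * m) = ((2 * m).factorial : ℝ) * Pp p m := by
  induction m with
  | zero => simp [Fp_zero, Pp]
  | succ m ih =>
    have h : 2 * (m + 1) = 2 * m + 2 := by ring
    rw [h, Fp_rec, Pp_succ]
    have hf1 : ((m + 1).factorial : ℝ) = ((m : ℝ) + 1) * (m.factorial : ℝ) := by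
      push_cast [Nat.factorial_succ]; ring
    have hf2 : ((2 * m + 2).factorial : ℝ) =
        ((2 * (m : ℝ)) + 2) * ((2 * (m : ℝ)) + 1) * ((2 * m).factorial : ℝ) := by
      rw [show 2 * m + 2 = (2 * m + 1) + 1 from rfl, Nat.factorial_succ, Nat.factorial_succ]
      push_cast; ring
    rw [hf1, hf2]
    push_cast
    linear_combination (((m : ℝ) + 1) * (2 * (m : ℝ) + 1) * (2 * p + 2 * (m : ℝ))) * ih

private lemma Gamma_add_nat' (p : ℝ) (hp : 0 < p) (k : ℕ) :
    Real.Gamma (p + k) = Pp p k * Real.Gamma p := by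
  induction k with
  | zero => simp [Pp]
  | succ k ih =>
    have h : p + (k + 1 : ℕ) = (p + k) + 1 := by push_cast; ring
    rw [h, Real.Gamma_add_one (by positivity), ih, Pp_succ]
    ring

theorem alternating_sum_choose_beta_symm (p : ℝ) (hp : 0 < p) (n : ℕ) (hn : 1 ≤ n) :
    ∑ k ∈ Finset.range (n + 1),
      (-1 : ℝ) ^ k * (n.choose k : ℝ) * eulerBeta (p + k) (p + (n - k : ℕ)) =
      if Even n then
        (n.factorial : ℝ) * Real.Gamma p * Real.Gamma (p + n / 2) /
          (Real.Gamma ((n : ℝ) / 2 + 1) * Real.Gamma (2 * p + n))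
      else 0 := by
  have hΓn : Real.Gamma (2 * p + n) ≠ 0 :=
    (Real.Gamma_pos_of_pos (by positivity)).ne'
  have hmain : ∑ k ∈ Finset.range (n + 1),
      (-1 : ℝ) ^ k * (n.choose k : ℝ) * eulerBeta (p + k) (p + (n - k : ℕ)) =
      Fp p n * (Real.Gamma p * Real.Gamma p) / Real.Gamma (2 * p + n) := by
    rw [Fp, Finset.sum_mul, Finset.sum_div]
    refine Finset.sum_congr rfl ?_
    intro k hk
    have hk' : k ≤ n := Nat.lt_succ_iff.mp (Finset.mem_range.mp hk)
    have hsum : (p + k) + (p + ((n - k : ℕ) : ℝ)) = 2 * p + n := by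
      rw [Nat.cast_sub hk']; ring
    rw [eulerBeta, hsum, Gamma_add_nat' p hp k, Gamma_add_nat' p hp (n - k)]
    ring
  rw [hmain]
  rcases Nat.even_or_odd n with he | ho
  · obtain ⟨m, hm⟩ := he
    rw [if_pos ⟨m, hm⟩]
    subst hm
    have hn2 : ((m + m : ℕ) : ℝ) / 2 = (m : ℝ) := by push_cast; ring
    rw [hn2, Gamma_add_nat' p hp m, Real.Gamma_nat_eq_factorial]
    have h2m : m + m = 2 * m := by ring
    rw [h2m]
    have hF := Fp_even p m
    have hmf : ((m.factorial : ℕ) : ℝ) ≠ 0 := by positivity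
    have hΓ : Real.Gamma (2 * p + ((2 * m : ℕ) : ℝ)) ≠ 0 := by
      have h' : ((m + m : ℕ) : ℝ) = ((2 * m : ℕ) : ℝ) := by push_cast; ring
      rwa [h'] at hΓn
    rw [div_eq_div_iff hΓ (mul_ne_zero hmf hΓ)]
    linear_combination (Real.Gamma p * Real.Gamma p *
      Real.Gamma (2 * p + ((2 * m : ℕ) : ℝ))) * hF
  · rw [if_neg (by simpa [Nat.even_iff, Nat.odd_iff] using ho)]
    obtain ⟨m, hm⟩ := ho
    rw [hm, Fp_odd, zero_mul, zero_div]
end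

section
/- Let p > 0 be a real number and n ≥ 1 an integer. Then ∑_{k=0}^{n} (−1)^k · C(n,k) · Γ(p + k) · Γ(p + n − k) equals n! · Γ(n/2 + p) · Γ(p) / Γ(n/2 + 1) if n is even, and equals 0 if n is odd. Here C(n,k) is the binomial coefficient. -/
open Finset Real

private noncomputable def S (p : ℝ) (n : ℕ) : ℝ :=
  ∑ k ∈ range (n + 1),
    (-1 : ℝ) ^ k * (n.choose k : ℝ) * Gamma (p + k) * Gamma (p + (n - k : ℕ))

private lemma refl_aux (p : ℝ) (n : ℕ) (c : ℕ → ℝ) :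
    ∑ k ∈ range (n + 1),
      c k * ((-1:ℝ)^k * (n.choose k : ℝ) * Gamma (p + k) * Gamma (p + (n - k : ℕ)))
    = (-1:ℝ)^n * ∑ k ∈ range (n + 1),
      c (n - k) * ((-1:ℝ)^k * (n.choose k : ℝ) * Gamma (p + k) * Gamma (p + (n - k : ℕ))) := by
  rw [Finset.mul_sum, ← Finset.sum_range_reflect
      (fun k => (-1:ℝ)^n * (c (n - k) * ((-1:ℝ)^k * (n.choose k : ℝ) * Gamma (p + k)
        * Gamma (p + (n - k : ℕ))))) (n+1)]
  apply sum_congr rfl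
  intro j hj
  have hj' : j ≤ n := Nat.lt_succ_iff.mp (mem_range.mp hj)
  have h1 : n + 1 - 1 - j = n - j := by omega
  have h2 : n - (n - j) = j := by omega
  have h3 : (-1:ℝ)^(n-j) = (-1)^n * (-1)^j := by
    have key : (-1:ℝ)^(n-j) * (-1)^j = (-1)^n := by
      rw [← pow_add]; congr 1; omega
    calc (-1:ℝ)^(n-j) = (-1)^(n-j) * ((-1)^j * (-1)^j) := by
          rw [← pow_add, ← two_mul, pow_mul]; norm_num
      _ = (-1)^n * (-1)^j := by rw [← mul_assoc, key]
  simp only [h1, h2, Nat.choose_symm hj', h3]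
  ring_nf
  have h4 : (-1:ℝ)^(n*2) = 1 := by rw [mul_comm, pow_mul]; norm_num
  rw [h4, mul_one]

private lemma S_odd (p : ℝ) {n : ℕ} (hn : Odd n) : S p n = 0 := by
  have h := refl_aux p n (fun _ => (1:ℝ))
  simp only [one_mul, hn.neg_one_pow] at h
  have h' : S p n = -1 * S p n := h
  linarith

private lemma Q_even (p : ℝ) (m : ℕ) :
    ∑ k ∈ range (2*m + 1), (k:ℝ) *
      ((-1:ℝ)^k * ((2*m).choose k : ℝ) * Gamma (p + k) * Gamma (p + (2*m - k : ℕ)))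
    = m * S p (2*m) := by
  have h := refl_aux p (2*m) (fun k => (k:ℝ))
  rw [Even.neg_one_pow ⟨m, by ring⟩, one_mul] at h
  have key : (∑ k ∈ range (2*m + 1), (k:ℝ) *
      ((-1:ℝ)^k * ((2*m).choose k : ℝ) * Gamma (p + k) * Gamma (p + (2*m - k : ℕ))))
      + (∑ k ∈ range (2*m + 1), (k:ℝ) *
      ((-1:ℝ)^k * ((2*m).choose k : ℝ) * Gamma (p + k) * Gamma (p + (2*m - k : ℕ))))
      = (2*m : ℝ) * S p (2*m) := by
    nth_rewrite 2 [h]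
    rw [← Finset.sum_add_distrib, S, Finset.mul_sum]
    apply sum_congr rfl
    intro k hk
    have hk' : k ≤ 2*m := Nat.lt_succ_iff.mp (mem_range.mp hk)
    have hc : ((2*m - k : ℕ):ℝ) = 2*m - k := by
      rw [Nat.cast_sub hk']; push_cast; ring
    rw [hc]; ring
  linarith

private lemma step1 (p : ℝ) (hp : 0 < p) (n : ℕ) :
    ∑ k ∈ range (n + 2),
      (-1 : ℝ) ^ k * ((n+1).choose k : ℝ) * Gamma (p + k) * Gamma (p + (n + 1 - k : ℕ))
    = ∑ i ∈ range (n + 1),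
      ((n:ℝ) - 2*i) * ((-1:ℝ)^i * (n.choose i : ℝ) * Gamma (p + i) * Gamma (p + (n - i : ℕ))) := by
  have hpk : ∀ k : ℕ, p + (k:ℝ) ≠ 0 := fun k => by positivity
  have hgam : ∀ k : ℕ, Gamma (p + k + 1) = (p + k) * Gamma (p + k) :=
    fun k => Real.Gamma_add_one (hpk k)
  set u : ℕ → ℝ := fun i => (-1:ℝ)^(i+1) * (n.choose i : ℝ) * ((p+i) * Gamma (p+i)) * Gamma (p + (n - i : ℕ)) with hu
  set v : ℕ → ℝ := fun i => (-1:ℝ)^(i+1) * (n.choose (i+1) : ℝ) * Gamma (p + ((i:ℝ)+1)) * Gamma (p + (n - i : ℕ)) with hv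
  set w : ℕ → ℝ := fun i => (-1:ℝ)^i * (n.choose i : ℝ) * Gamma (p + i) * Gamma (p + (n + 1 - i : ℕ)) with hw
  have hsplit : ∑ k ∈ range (n + 2),
      (-1 : ℝ) ^ k * ((n+1).choose k : ℝ) * Gamma (p + k) * Gamma (p + (n + 1 - k : ℕ))
      = (∑ i ∈ range (n+1), u i) + ((∑ i ∈ range (n+1), v i) + w 0) := by
    rw [Finset.sum_range_succ']
    have h0 : (-1:ℝ)^0 * ((n+1).choose 0 : ℝ) * Gamma (p + (0:ℕ)) * Gamma (p + (n + 1 - 0 : ℕ)) = w 0 := by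
      simp [hw]
    rw [h0]
    have hmain : ∑ i ∈ range (n+1), ((-1:ℝ)^(i+1) * ((n+1).choose (i+1) : ℝ) *
        Gamma (p + ((i+1:ℕ):ℝ)) * Gamma (p + ((n+1-(i+1):ℕ):ℝ)))
        = ∑ i ∈ range (n+1), (u i + v i) := by
      apply sum_congr rfl
      intro i hi
      have hi' : i ≤ n := Nat.lt_succ_iff.mp (mem_range.mp hi)
      have hsub : n + 1 - (i + 1) = n - i := by omega
      have hcast : ((i+1 : ℕ):ℝ) = (i:ℝ) + 1 := by push_cast; ring
      have hpadd : p + ((i:ℝ)+1) = (p + i) + 1 := by ring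
      rw [hsub, Nat.choose_succ_succ, hcast, hu, hv]
      simp only []
      rw [hpadd, hgam i]
      push_cast
      ring
    rw [hmain, Finset.sum_add_distrib, add_assoc]
  have hVW : (∑ i ∈ range (n+1), v i) + w 0 = ∑ i ∈ range (n+1), w i := by
    have h1 : ∑ i ∈ range (n+2), w i = (∑ i ∈ range (n+1), w (i+1)) + w 0 :=
      Finset.sum_range_succ' w (n+1)
    have h2 : ∑ i ∈ range (n+2), w i = (∑ i ∈ range (n+1), w i) + w (n+1) :=
      Finset.sum_range_succ w (n+1)
    have h3 : w (n+1) = 0 := by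
      simp [hw, Nat.choose_succ_self]
    have h4 : ∀ i ∈ range (n+1), w (i+1) = v i := by
      intro i hi
      have hsub : n + 1 - (i + 1) = n - i := by omega
      have hcast : ((i+1 : ℕ):ℝ) = (i:ℝ) + 1 := by push_cast; ring
      rw [hw, hv]
      simp only []
      rw [hsub, hcast]
    rw [sum_congr rfl h4] at h1
    rw [h1, h3, add_zero] at h2
    linarith [h2]
  rw [hsplit, hVW, ← Finset.sum_add_distrib]
  apply sum_congr rfl
  intro i hi
  have hi' : i ≤ n := Nat.lt_succ_iff.mp (mem_range.mp hi)
  have hsub : n + 1 - i = (n - i) + 1 := by omega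
  have hcast2 : ((n - i + 1 : ℕ):ℝ) = ((n-i:ℕ):ℝ) + 1 := by push_cast; ring
  have hpadd : p + (((n-i:ℕ):ℝ)+1) = (p + ((n-i:ℕ):ℝ)) + 1 := by ring
  have hcast3 : ((n - i : ℕ):ℝ) = (n:ℝ) - i := by
    rw [Nat.cast_sub hi']
  rw [hu, hw]
  simp only []
  rw [hsub, hcast2, hpadd, hgam (n-i), hcast3]
  ring

private lemma S_rec (p : ℝ) (hp : 0 < p) (m : ℕ) :
    S p (2*m+2) = 2*(2*(m:ℝ)+1)*(p+(m:ℝ)) * S p (2*m) := by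
  have hpk : ∀ k : ℕ, p + (k:ℝ) ≠ 0 := fun k => by positivity
  have hgam : ∀ k : ℕ, Gamma (p + k + 1) = (p + k) * Gamma (p + k) :=
    fun k => Real.Gamma_add_one (hpk k)
  have hQ : ∑ i ∈ range (2*m+2), (i:ℝ) * ((-1:ℝ)^i * ((2*m+1).choose i : ℝ) *
      Gamma (p + i) * Gamma (p + (2*m+1 - i : ℕ)))
      = -(2*(m:ℝ)+1) * ((p + m) * S p (2*m)) := by
    rw [Finset.sum_range_succ']
    have hterm : ∀ j ∈ range (2*m+1), ((j+1:ℕ):ℝ) * ((-1:ℝ)^(j+1) * ((2*m+1).choose (j+1) : ℝ) *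
        Gamma (p + ((j+1:ℕ):ℝ)) * Gamma (p + ((2*m+1 - (j+1) : ℕ):ℝ)))
        = -(2*(m:ℝ)+1) * ((p + (j:ℝ)) *
          ((-1:ℝ)^j * ((2*m).choose j : ℝ) * Gamma (p + j) * Gamma (p + (2*m - j : ℕ)))) := by
      intro j hj
      have hsub : 2*m+1 - (j+1) = 2*m - j := by omega
      have hcast : ((j+1:ℕ):ℝ) = (j:ℝ)+1 := by push_cast; ring
      have hchoose : ((j:ℝ)+1) * ((2*m+1).choose (j+1) : ℝ) = (2*(m:ℝ)+1) * ((2*m).choose j : ℝ) := by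
        have h := Nat.add_one_mul_choose_eq (2*m) j
        have h2 := congrArg (fun x : ℕ => (x:ℝ)) h
        push_cast at h2
        linarith
      have hpadd : p + ((j:ℝ)+1) = (p + (j:ℝ)) + 1 := by ring
      rw [hsub, hcast, hpadd, hgam j, pow_succ]
      linear_combination (-((-1:ℝ)^j * (p+(j:ℝ)) * Gamma (p + (j:ℝ)) *
        Gamma (p + ((2*m - j : ℕ):ℝ)))) * hchoose
    rw [sum_congr rfl hterm]
    have hz : ((0:ℕ):ℝ) * ((-1:ℝ)^(0:ℕ) * ((2*m+1).choose 0 : ℝ) *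
        Gamma (p + ((0:ℕ):ℝ)) * Gamma (p + ((2*m+1 - 0 : ℕ):ℝ))) = 0 := by simp
    rw [hz, add_zero, ← Finset.mul_sum]
    have hsplit : ∑ j ∈ range (2*m+1), ((p + (j:ℝ)) *
        ((-1:ℝ)^j * ((2*m).choose j : ℝ) * Gamma (p + j) * Gamma (p + (2*m - j : ℕ))))
        = p * S p (2*m) + (m:ℝ) * S p (2*m) := by
      rw [← Q_even p m, S, Finset.mul_sum, ← Finset.sum_add_distrib]
      apply sum_congr rfl
      intro k hk
      ring
    rw [hsplit]
    ring
  have h1 := step1 p hp (2*m+1)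
  have hS : S p (2*m+2) = ∑ i ∈ range (2*m+1+1),
      (((2*m+1:ℕ):ℝ) - 2*i) * ((-1:ℝ)^i * ((2*m+1).choose i : ℝ) *
        Gamma (p + i) * Gamma (p + (2*m+1 - i : ℕ))) := by
    rw [S]
    exact h1
  rw [hS]
  have hexp : ∑ i ∈ range (2*m+1+1),
      (((2*m+1:ℕ):ℝ) - 2*i) * ((-1:ℝ)^i * ((2*m+1).choose i : ℝ) *
        Gamma (p + i) * Gamma (p + (2*m+1 - i : ℕ)))
      = ((2*(m:ℝ)+1)) * (∑ i ∈ range (2*m+2), ((-1:ℝ)^i * ((2*m+1).choose i : ℝ) *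
        Gamma (p + i) * Gamma (p + (2*m+1 - i : ℕ))))
        - 2 * ∑ i ∈ range (2*m+2), (i:ℝ) * ((-1:ℝ)^i * ((2*m+1).choose i : ℝ) *
        Gamma (p + i) * Gamma (p + (2*m+1 - i : ℕ))) := by
    rw [Finset.mul_sum, Finset.mul_sum, ← Finset.sum_sub_distrib]
    apply sum_congr rfl
    intro i hi
    push_cast
    ring
  rw [hexp, hQ]
  have hodd : ∑ i ∈ range (2*m+2), ((-1:ℝ)^i * ((2*m+1).choose i : ℝ) *
      Gamma (p + i) * Gamma (p + (2*m+1 - i : ℕ))) = 0 := by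
    have := S_odd p (n := 2*m+1) ⟨m, by ring⟩
    rw [S] at this
    exact this
  rw [hodd]
  ring

private lemma S_closed (p : ℝ) (hp : 0 < p) (m : ℕ) :
    S p (2*m) * (m.factorial : ℝ) = ((2*m).factorial : ℝ) * Gamma (p + m) * Gamma p := by
  induction m with
  | zero => simp [S]
  | succ k ih =>
    have h := S_rec p hp k
    rw [show 2*(k+1) = 2*k+2 from by ring, h]
    have hg : Gamma (p + ((k+1:ℕ):ℝ)) = (p+(k:ℝ)) * Gamma (p + (k:ℝ)) := by
      push_cast
      rw [show p + ((k:ℝ)+1) = (p + (k:ℝ)) + 1 from by ring]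
      exact Real.Gamma_add_one (by positivity)
    rw [hg]
    have hfac : ((k+1).factorial : ℝ) = ((k:ℝ)+1) * (k.factorial : ℝ) := by
      rw [Nat.factorial_succ]; push_cast; ring
    have hfac2 : ((2*k+2).factorial : ℝ) = (2*(k:ℝ)+2)*(2*(k:ℝ)+1) * ((2*k).factorial : ℝ) := by
      rw [show 2*k+2 = (2*k+1)+1 from by ring, Nat.factorial_succ, Nat.factorial_succ]
      push_cast; ring
    rw [hfac, hfac2]
    linear_combination (2*(2*(k:ℝ)+1)*(p+(k:ℝ))*((k:ℝ)+1)) * ih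

theorem alternating_sum_choose_gamma (p : ℝ) (hp : 0 < p) (n : ℕ) (hn : 1 ≤ n) :
    ∑ k ∈ Finset.range (n + 1),
      (-1 : ℝ) ^ k * (n.choose k : ℝ) * Real.Gamma (p + k) * Real.Gamma (p + (n - k : ℕ)) =
      if Even n then
        (n.factorial : ℝ) * Real.Gamma ((n : ℝ) / 2 + p) * Real.Gamma p /
          Real.Gamma ((n : ℝ) / 2 + 1)
      else 0 := by
  rcases Nat.even_or_odd n with he | ho
  · rw [if_pos he]
    obtain ⟨m, hm⟩ := he
    have hn2 : n = 2*m := by omega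
    subst hn2
    have hhalf : ((2*m : ℕ):ℝ)/2 = (m:ℝ) := by push_cast; ring
    rw [hhalf, Real.Gamma_nat_eq_factorial m, show (m:ℝ) + p = p + (m:ℝ) from by ring]
    have hkey := S_closed p hp m
    have hmf : (m.factorial : ℝ) ≠ 0 := by positivity
    have : S p (2*m) = ((2*m).factorial : ℝ) * Gamma (p + m) * Gamma p / (m.factorial : ℝ) := by
      field_simp
      linarith [hkey]
    rw [S] at this
    exact this
  · rw [if_neg (Nat.not_even_iff_odd.mpr ho)]
    have := S_odd p ho
    rw [S] at this
    exact this
end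

section
/- For every integer n ≥ 1, the alternating convolution ∑_{k=0}^{n} (−1)^k · C(2k,k) · C(2n−2k, n−k) equals 2^n · C(n, n/2) if n is even, and equals 0 if n is odd. Here C(a,b) denotes the binomial coefficient. -/
open Finset

private def cb (k : ℕ) : ℤ := ((2 * k).choose k : ℤ)

private def Tsum (n : ℕ) : ℤ := ∑ k ∈ range (n + 1), (-1 : ℤ) ^ k * cb k * cb (n - k)

private def Usum (n : ℕ) : ℤ :=
  ∑ k ∈ range (n + 1), (k : ℤ) * ((-1 : ℤ) ^ k * cb k * cb (n - k))

private lemma cb_eq (k : ℕ) : cb k = (Nat.centralBinom k : ℤ) := rfl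

private lemma cb_rec (j : ℕ) : ((j : ℤ) + 1) * cb (j + 1) = 2 * (2 * j + 1) * cb j := by
  have h := Nat.succ_mul_centralBinom_succ j
  have h2 := congrArg (fun x : ℕ => (x : ℤ)) h
  push_cast at h2
  rw [cb_eq, cb_eq]
  linarith

private lemma reflectT (n : ℕ) : Tsum n = (-1 : ℤ) ^ n * Tsum n := by
  unfold Tsum
  rw [Finset.mul_sum]
  rw [← Finset.sum_range_reflect (fun k => (-1 : ℤ) ^ k * cb k * cb (n - k)) (n + 1)]
  refine Finset.sum_congr rfl fun k hk => ?_
  have hk' : k ≤ n := Nat.lt_succ_iff.mp (mem_range.mp hk)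
  have h0 : n + 1 - 1 - k = n - k := by omega
  have h1 : n - (n - k) = k := by omega
  have h2 : (-1 : ℤ) ^ n = (-1) ^ (n - k) * (-1) ^ k := by
    rw [← pow_add]; congr 1; omega
  have hk2 : ((-1 : ℤ) ^ k) ^ 2 = 1 := by
    rw [← pow_mul, mul_comm, pow_mul]; norm_num
  simp only [h0, h1, h2]
  linear_combination (-((-1 : ℤ) ^ (n - k) * cb (n - k) * cb k)) * hk2

private lemma reflectU (n : ℕ) : Usum n = (-1 : ℤ) ^ n * ((n : ℤ) * Tsum n - Usum n) := by
  have h : Usum n = ∑ k ∈ range (n + 1),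
      (-1 : ℤ) ^ n * (((n : ℤ) - k) * ((-1) ^ k * cb k * cb (n - k))) := by
    unfold Usum
    rw [← Finset.sum_range_reflect
      (fun k => (k : ℤ) * ((-1 : ℤ) ^ k * cb k * cb (n - k))) (n + 1)]
    refine Finset.sum_congr rfl fun k hk => ?_
    have hk' : k ≤ n := Nat.lt_succ_iff.mp (mem_range.mp hk)
    have h0 : n + 1 - 1 - k = n - k := by omega
    have h1 : n - (n - k) = k := by omega
    have h3 : ((n - k : ℕ) : ℤ) = (n : ℤ) - k := by omega
    have h2 : (-1 : ℤ) ^ n = (-1) ^ (n - k) * (-1) ^ k := by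
      rw [← pow_add]; congr 1; omega
    have hk2 : ((-1 : ℤ) ^ k) ^ 2 = 1 := by
      rw [← pow_mul, mul_comm, pow_mul]; norm_num
    simp only [h0, h1, h3, h2]
    linear_combination (-(((n : ℤ) - k) * (-1 : ℤ) ^ (n - k) * cb (n - k) * cb k)) * hk2
  have h2 : (n : ℤ) * Tsum n - Usum n =
      ∑ k ∈ range (n + 1), ((n : ℤ) - k) * ((-1 : ℤ) ^ k * cb k * cb (n - k)) := by
    unfold Tsum Usum
    rw [Finset.mul_sum, ← Finset.sum_sub_distrib]
    exact Finset.sum_congr rfl fun k hk => by ring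
  rw [h2, Finset.mul_sum]
  exact h

private lemma recU (n : ℕ) : Usum (n + 1) = -4 * Usum n - 2 * Tsum n := by
  unfold Usum Tsum
  rw [Finset.sum_range_succ'
    (fun k => (k : ℤ) * ((-1 : ℤ) ^ k * cb k * cb (n + 1 - k))) (n + 1)]
  simp only [Nat.cast_zero, zero_mul, add_zero]
  rw [Finset.mul_sum, Finset.mul_sum, ← Finset.sum_sub_distrib]
  refine Finset.sum_congr rfl fun j hj => ?_
  have hrec := cb_rec j
  have h0 : n + 1 - (j + 1) = n - j := by omega
  show ((j + 1 : ℕ) : ℤ) * ((-1 : ℤ) ^ (j + 1) * cb (j + 1) * cb (n + 1 - (j + 1))) = _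
  rw [h0]
  push_cast
  linear_combination (-(-1 : ℤ) ^ j * cb (n - j)) * hrec

private lemma oddT {n : ℕ} (h : Odd n) : Tsum n = 0 := by
  have := reflectT n
  rw [h.neg_one_pow] at this
  linarith

private lemma evenU {n : ℕ} (h : Even n) : 2 * Usum n = (n : ℤ) * Tsum n := by
  have := reflectU n
  rw [h.neg_one_pow, one_mul] at this
  linarith

private lemma mainT : ∀ n : ℕ, Tsum n = if Even n then 2 ^ n * cb (n / 2) else 0 := by
  intro n
  induction n using Nat.strong_induction_on with
  | _ n ih =>
    rcases Nat.even_or_odd n with he | ho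
    · rw [if_pos he]
      obtain ⟨j, hj⟩ := he
      rcases Nat.lt_or_ge n 2 with hlt | h2
      · interval_cases n
        · norm_num [Tsum, cb]
        · omega
      · have hn : n = (n - 2) + 2 := by omega
        set m := n - 2 with hm
        have hj1 : 1 ≤ j := by omega
        have hme : Even m := ⟨j - 1, by omega⟩
        have hTm : Tsum m = 2 ^ m * cb (m / 2) := by
          have := ih m (by omega)
          rwa [if_pos hme] at this
        have h1 : Usum (m + 2) = -4 * Usum (m + 1) - 2 * Tsum (m + 1) := recU (m + 1)
        have h2' : Usum (m + 1) = -4 * Usum m - 2 * Tsum m := recU m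
        have h3 : Tsum (m + 1) = 0 := oddT ⟨j - 1, by omega⟩
        have h4 : 2 * Usum m = (m : ℤ) * Tsum m := evenU hme
        have h5 : 2 * Usum (m + 2) = ((m : ℤ) + 2) * Tsum (m + 2) := by
          have h6 := evenU (n := m + 2) ⟨j, by omega⟩
          push_cast at h6; linarith
        have key : ((m : ℤ) + 2) * Tsum (m + 2) = 16 * ((m : ℤ) + 1) * Tsum m := by
          linear_combination -h5 + 2 * h1 - 8 * h2' - 4 * h3 + 16 * h4
        set i := j - 1 with hi
        have him : m / 2 = i := by omega
        have hn2 : n / 2 = i + 1 := by omega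
        have hcb := cb_rec i
        have hmi : (m : ℤ) = 2 * (i : ℤ) := by omega
        have hcancel : ((m : ℤ) + 2) ≠ 0 := by positivity
        have goal' : ((m : ℤ) + 2) * Tsum (m + 2) =
            ((m : ℤ) + 2) * (2 ^ (m + 2) * cb (i + 1)) := by
          rw [key, hTm, him, hmi]
          have hpow : (2 : ℤ) ^ (m + 2) = 4 * 2 ^ m := by ring
          rw [hpow]
          linear_combination (-8 * (2 : ℤ) ^ m) * hcb
        have hfin := mul_left_cancel₀ hcancel goal'
        rw [hn2, hn]
        exact hfin
    · rw [if_neg (Nat.not_even_iff_odd.mpr ho), oddT ho]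

theorem alternating_central_binomial_convolution (n : ℕ) (hn : 1 ≤ n) :
    ∑ k ∈ Finset.range (n + 1),
      (-1 : ℤ) ^ k * ((2 * k).choose k : ℤ) * ((2 * n - 2 * k).choose (n - k) : ℤ) =
      if Even n then (2 : ℤ) ^ n * (n.choose (n / 2) : ℤ) else 0 := by
  have hT : ∑ k ∈ Finset.range (n + 1),
      (-1 : ℤ) ^ k * ((2 * k).choose k : ℤ) * ((2 * n - 2 * k).choose (n - k) : ℤ) = Tsum n := by
    unfold Tsum cb
    refine Finset.sum_congr rfl fun k hk => ?_
    have h : 2 * (n - k) = 2 * n - 2 * k := by omega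
    rw [h]
  rw [hT, mainT n]
  by_cases he : Even n
  · rw [if_pos he, if_pos he]
    obtain ⟨j, hj⟩ := he
    have h : 2 * (n / 2) = n := by omega
    unfold cb
    rw [h]
  · rw [if_neg he, if_neg he]
end

section
/- Let m ≥ 1 and n ≥ 0 be integers and let p₁, …, p_m > 0 be real numbers. Then the sum, over all tuples (k₁, …, k_m) of nonnegative integers with k₁ + ⋯ + k_m = n, of the multinomial coefficient n!/(k₁!⋯k_m!) times B(p₁ + k₁, …, p_m + k_m), equals B(p₁, …, p_m). -/
/-- The `m`-variable beta function `B(p₁,…,p_m) = Γ(p₁)⋯Γ(p_m)/Γ(p₁+⋯+p_m)`. -/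
noncomputable def multiBeta {m : ℕ} (p : Fin m → ℝ) : ℝ :=
  (∏ i, Real.Gamma (p i)) / Real.Gamma (∑ i, p i)

/-- Rising factorial `x (x+1) ⋯ (x+n-1)`. -/
noncomputable def ascReal (x : ℝ) (n : ℕ) : ℝ := ∏ i ∈ Finset.range n, (x + i)

lemma ascReal_zero (x : ℝ) : ascReal x 0 = 1 := Finset.prod_range_zero _

lemma ascReal_succ (x : ℝ) (n : ℕ) : ascReal x (n + 1) = ascReal x n * (x + n) :=
  Finset.prod_range_succ _ _

lemma ascReal_pos {x : ℝ} (hx : 0 < x) (n : ℕ) : 0 < ascReal x n :=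
  Finset.prod_pos fun i _ => by positivity

lemma Gamma_add_nat {x : ℝ} (hx : 0 < x) (n : ℕ) :
    Real.Gamma (x + n) = Real.Gamma x * ascReal x n := by
  induction n with
  | zero => simp [ascReal_zero]
  | succ n ih =>
    have hxn : x + (n : ℝ) ≠ 0 := by positivity
    have : x + ((n : ℕ) + 1 : ℕ) = (x + n) + 1 := by push_cast; ring
    rw [this, Real.Gamma_add_one hxn, ih, ascReal_succ]
    ring

/-- Chu–Vandermonde for rising factorials. -/
lemma ascReal_add_eq (x y : ℝ) (n : ℕ) :
    ascReal (x + y) n = ∑ ij ∈ Finset.HasAntidiagonal.antidiagonal n,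
      (n.choose ij.1 : ℝ) * (ascReal x ij.1 * ascReal y ij.2) := by
  induction n with
  | zero => simp [ascReal_zero]
  | succ n ih =>
    rw [ascReal_succ, ih, Finset.sum_mul, Finset.sum_antidiagonal_choose_succ_mul
      (fun i j => ascReal x i * ascReal y j) n, ← Finset.sum_add_distrib]
    refine Finset.sum_congr rfl fun ij hij => ?_
    have hsum : ij.1 + ij.2 = n := Finset.HasAntidiagonal.mem_antidiagonal.mp hij
    have hch : (n.choose ij.2 : ℝ) = (n.choose ij.1 : ℝ) := by
      norm_cast
      rw [← hsum, Nat.add_comm, Nat.choose_symm_of_eq_add rfl]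
    rw [hch, ascReal_succ, ascReal_succ]
    have : x + y + (n : ℝ) = (y + ij.2) + (x + ij.1) := by
      rw [← hsum]; push_cast; ring
    rw [this]
    ring

open Finset in
/-- Multinomial Chu–Vandermonde for rising factorials. -/
lemma ascReal_sum_eq {α : Type*} [DecidableEq α] (s : Finset α) (f : α → ℝ) (n : ℕ) :
    ascReal (∑ i ∈ s, f i) n = ∑ k ∈ s.piAntidiag n,
      (Nat.multinomial s k : ℝ) * ∏ i ∈ s, ascReal (f i) (k i) := by
  induction s using Finset.cons_induction generalizing n with
  | empty =>
    cases n with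
    | zero => simp [ascReal_zero]
    | succ n =>
      have h0 : ascReal (0 : ℝ) (n + 1) = 0 :=
        Finset.prod_eq_zero (Finset.mem_range.mpr (Nat.succ_pos n)) (by simp)
      simp [piAntidiag_empty_of_ne_zero (Nat.succ_ne_zero n), h0]
  | cons a s has ih =>
    rw [Finset.sum_cons, ascReal_add_eq, piAntidiag_cons, sum_disjiUnion]
    refine Finset.sum_congr rfl fun p hp => ?_
    have hpn : p.1 + p.2 = n := Finset.HasAntidiagonal.mem_antidiagonal.mp hp
    rw [Finset.sum_map, ih]
    simp only [Finset.mul_sum, ← mul_assoc]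
    refine Finset.sum_congr rfl fun g hg => ?_
    rw [Finset.mem_piAntidiag] at hg
    have hga : g a = 0 := by
      by_contra h
      exact has (hg.2 a h)
    have hgeq : ∀ i ∈ s, (addRightEmbedding fun t => if t = a then p.1 else 0) g i = g i := by
      intro i hi
      have : i ≠ a := ne_of_mem_of_not_mem hi has
      simp [addRightEmbedding_apply, this]
    have hgaeq : (addRightEmbedding fun t => if t = a then p.1 else 0) g a = p.1 := by
      simp [addRightEmbedding_apply, hga]
    have hmult : Nat.multinomial s ((addRightEmbedding fun t => if t = a then p.1 else 0) g)
        = Nat.multinomial s g := Nat.multinomial_congr fun i hi => hgeq i hi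
    have hprod : ∏ x ∈ s, ascReal (f x)
          ((addRightEmbedding fun t => if t = a then p.1 else 0) g x)
        = ∏ x ∈ s, ascReal (f x) (g x) :=
      Finset.prod_congr rfl fun i hi => by rw [hgeq i hi]
    have hsum2 : ∑ x ∈ s, (addRightEmbedding fun t => if t = a then p.1 else 0) g x = p.2 := by
      rw [Finset.sum_congr rfl fun i hi => hgeq i hi]
      exact hg.1
    rw [Nat.multinomial_cons, Finset.prod_cons, hgaeq, hprod, hmult, hsum2, hpn]
    push_cast
    ring

theorem sum_multinomial_multiBeta (m : ℕ) (hm : 1 ≤ m) (n : ℕ)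
    (p : Fin m → ℝ) (hp : ∀ i, 0 < p i) :
    ∑ k ∈ Finset.Nat.antidiagonalTuple m n,
      (Nat.multinomial Finset.univ k : ℝ) * multiBeta (fun i => p i + k i) =
      multiBeta p := by
  have hne : Nonempty (Fin m) := ⟨⟨0, hm⟩⟩
  set s : ℝ := ∑ i, p i with hs
  have hspos : 0 < s := Finset.sum_pos (fun i _ => hp i) Finset.univ_nonempty
  have hGs : Real.Gamma s ≠ 0 := (Real.Gamma_pos_of_pos hspos).ne'
  have hstep : ∀ k ∈ Finset.Nat.antidiagonalTuple m n,
      (Nat.multinomial Finset.univ k : ℝ) * multiBeta (fun i => p i + k i) =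
      (∏ i, Real.Gamma (p i)) / (Real.Gamma s * ascReal s n) *
        ((Nat.multinomial Finset.univ k : ℝ) * ∏ i, ascReal (p i) (k i)) := by
    intro k hk
    have hksum : ∑ i, k i = n := Finset.Nat.mem_antidiagonalTuple.mp hk
    have hnum : ∀ i, Real.Gamma (p i + k i) = Real.Gamma (p i) * ascReal (p i) (k i) :=
      fun i => Gamma_add_nat (hp i) (k i)
    have hden : (∑ i, (p i + (k i : ℝ))) = s + n := by
      rw [Finset.sum_add_distrib, ← hs, ← hksum]
      push_cast
      ring
    unfold multiBeta
    simp only [hden, hnum, Gamma_add_nat hspos n, Finset.prod_mul_distrib]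
    ring
  rw [Finset.sum_congr rfl hstep, ← Finset.mul_sum]
  have hkey := ascReal_sum_eq Finset.univ p n
  rw [Finset.piAntidiag_univ_fin_eq_antidiagonalTuple n m, ← hs] at hkey
  rw [← hkey]
  have hasc : ascReal s n ≠ 0 := (ascReal_pos hspos n).ne'
  unfold multiBeta
  rw [← hs]
  field_simp
end

section
/- Let m ≥ 2 be an even integer and n ≥ 1 an integer. Then the sum, over all tuples (k₁, …, k_m) of nonnegative integers with k₁ + ⋯ + k_m = n, of the product C(2k₁,k₁) ⋯ C(2k_m,k_m), equals 4^n · C(n + m/2 − 1, n). -/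
open Finset PowerSeries

namespace SCBP

local notation "c" => Nat.centralBinom

lemma weighted_reflect (N : ℕ) :
    ∑ j ∈ range (N + 1), (N - j) * (c j * c (N - j)) =
      ∑ j ∈ range (N + 1), j * (c j * c (N - j)) := by
  rw [← Finset.sum_range_reflect]
  apply Finset.sum_congr rfl
  intro j hj
  have hj' : j ≤ N := Nat.lt_succ_iff.mp (mem_range.mp hj)
  have h1 : N + 1 - 1 - j = N - j := by omega
  rw [h1, Nat.sub_sub_self hj']
  ring

lemma sum_c (n : ℕ) : ∑ j ∈ range (n + 1), c j * c (n - j) = 4 ^ n := by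
  induction n with
  | zero => decide
  | succ n ih =>
    set S := ∑ j ∈ range (n + 1), c j * c (n - j) with hS
    set T := ∑ j ∈ range (n + 1), j * (c j * c (n - j)) with hT
    have h1 : (n + 1) * S = 2 * T + S := by
      rw [hS, Finset.mul_sum]
      have : ∀ j ∈ range (n + 1), (n + 1) * (c j * c (n - j)) =
          j * (c j * c (n - j)) + ((n - j) * (c j * c (n - j)) + c j * c (n - j)) := by
        intro j hj
        have hj' : j ≤ n := Nat.lt_succ_iff.mp (mem_range.mp hj)
        have : n + 1 = j + (n - j) + 1 := by omega
        rw [this]; ring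
      rw [Finset.sum_congr rfl this, Finset.sum_add_distrib, Finset.sum_add_distrib,
        weighted_reflect, two_mul]
      ring
    have h2 : (n + 1) * ∑ j ∈ range (n + 2), c j * c (n + 1 - j) =
        2 * ∑ j ∈ range (n + 2), j * (c j * c (n + 1 - j)) := by
      rw [Finset.mul_sum]
      have : ∀ j ∈ range (n + 2), (n + 1) * (c j * c (n + 1 - j)) =
          j * (c j * c (n + 1 - j)) + (n + 1 - j) * (c j * c (n + 1 - j)) := by
        intro j hj
        have hj' : j ≤ n + 1 := Nat.lt_succ_iff.mp (mem_range.mp hj)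
        have : n + 1 = j + (n + 1 - j) := by omega
        nth_rewrite 1 [this]; ring
      rw [Finset.sum_congr rfl this, Finset.sum_add_distrib, weighted_reflect (n + 1), two_mul]
    have h3 : ∑ j ∈ range (n + 2), j * (c j * c (n + 1 - j)) = 4 * T + 2 * S := by
      rw [Finset.sum_range_succ']
      simp only [Nat.zero_eq, zero_mul, add_zero]
      rw [hT, hS, Finset.mul_sum, Finset.mul_sum, ← Finset.sum_add_distrib]
      apply Finset.sum_congr rfl
      intro j hj
      have hs : n + 1 - (j + 1) = n - j := by omega
      rw [hs, ← mul_assoc, Nat.succ_mul_centralBinom_succ]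
      ring
    have h4 : (n + 1) * ∑ j ∈ range (n + 2), c j * c (n + 1 - j) = (n + 1) * (4 * S) := by
      rw [h2, h3]
      have : 2 * (4 * T + 2 * S) = 4 * (2 * T + S) := by ring
      rw [this, ← h1]; ring
    have := Nat.eq_of_mul_eq_mul_left (Nat.succ_pos n) h4
    rw [this, ih]; ring







lemma dite_sum_tuple (k : ℕ) (x : Fin k → ℕ) :
    ∑ j ∈ range k, (if h : j < k then x ⟨j, h⟩ else 0) = ∑ i : Fin k, x i := by
  rw [← Fin.sum_univ_eq_sum_range (fun j => if h : j < k then x ⟨j, h⟩ else 0) k]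
  apply Finset.sum_congr rfl
  intro i _
  rw [dif_pos i.isLt]

lemma dite_prod_tuple {M : Type*} [CommMonoid M] (k : ℕ) (x : Fin k → ℕ) (g : ℕ → M) :
    ∏ j ∈ range k, g (if h : j < k then x ⟨j, h⟩ else 0) = ∏ i : Fin k, g (x i) := by
  rw [← Fin.prod_univ_eq_prod_range (fun j => g (if h : j < k then x ⟨j, h⟩ else 0)) k]
  apply Finset.prod_congr rfl
  intro i _
  rw [dif_pos i.isLt]

lemma sum_tuple_eq_coeff {R : Type*} [CommSemiring R] (f : ℕ → R) (k n : ℕ) :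
    ∑ x ∈ Finset.Nat.antidiagonalTuple k n, ∏ i, f (x i) =
      PowerSeries.coeff (R := R) n ((PowerSeries.mk f) ^ k) := by
  rw [PowerSeries.coeff_pow]
  simp_rw [PowerSeries.coeff_mk]
  apply Finset.sum_nbij'
    (i := fun x => Finsupp.onFinset (range k)
      (fun j => if h : j < k then x ⟨j, h⟩ else 0)
      (fun j hj => mem_range.mpr (by by_contra h; exact hj (dif_neg h))))
    (j := fun l => fun i : Fin k => l i)
  · intro x hx
    simp only [Finset.mem_finsuppAntidiag]
    refine ⟨?_, Finsupp.support_onFinset_subset⟩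
    have h1 : (range k).sum ⇑(Finsupp.onFinset (range k)
        (fun j => if h : j < k then x ⟨j, h⟩ else 0)
        (fun j hj => mem_range.mpr (by by_contra h; exact hj (dif_neg h)))) =
        ∑ j ∈ range k, (if h : j < k then x ⟨j, h⟩ else 0) := by
      apply Finset.sum_congr rfl
      intro j _
      simp [Finsupp.onFinset_apply]
    rw [h1, dite_sum_tuple k x]
    exact Finset.Nat.mem_antidiagonalTuple.mp hx
  · intro l hl
    rw [Finset.Nat.mem_antidiagonalTuple]
    obtain ⟨hsum, hsupp⟩ := Finset.mem_finsuppAntidiag.mp hl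
    rw [Fin.sum_univ_eq_sum_range (fun j => l j) k]
    exact hsum
  · intro x hx
    ext i
    simp
  · intro l hl
    obtain ⟨hsum, hsupp⟩ := Finset.mem_finsuppAntidiag.mp hl
    ext j
    simp only [Finsupp.onFinset_apply]
    by_cases h : j < k
    · simp [h]
    · rw [dif_neg h]
      by_contra hne
      exact h (mem_range.mp (hsupp (Finsupp.mem_support_iff.mpr (fun he => hne he.symm))))
  · intro x hx
    rw [← dite_prod_tuple k x f]
    apply Finset.prod_congr rfl
    intro j hj
    simp [Finsupp.onFinset_apply]



lemma c_eq (j : ℕ) : (2 * j).choose j = Nat.centralBinom j := rfl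

lemma hsq_lemma : (PowerSeries.mk (fun j => ((2 * j).choose j : ℤ))) ^ 2 =
    PowerSeries.mk (fun j => (4 : ℤ) ^ j) := by
  ext N
  rw [pow_two, PowerSeries.coeff_mul, PowerSeries.coeff_mk]
  simp_rw [PowerSeries.coeff_mk]
  rw [Finset.Nat.sum_antidiagonal_eq_sum_range_succ_mk]
  have h := sum_c N
  calc ∑ j ∈ range (N + 1), (((2 * j).choose j : ℤ) * ((2 * (N - j)).choose (N - j) : ℤ))
      = ((∑ j ∈ range (N + 1), Nat.centralBinom j * Nat.centralBinom (N - j) : ℕ) : ℤ) := by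
        push_cast [c_eq]; rfl
    _ = (4 : ℤ) ^ N := by rw [h]; push_cast; rfl

end SCBP

theorem sum_central_binomial_products_even (m n : ℕ) (hm : 2 ≤ m) (hme : Even m)
    (hn : 1 ≤ n) :
    ∑ k ∈ Finset.Nat.antidiagonalTuple m n, ∏ i, (2 * k i).choose (k i) =
      4 ^ n * (n + m / 2 - 1).choose n := by
  obtain ⟨t, ht⟩ := hme
  have htm : m = 2 * t := by omega
  have ht1 : 1 ≤ t := by omega
  have hdiv : m / 2 = t := by omega
  set f : ℕ → ℤ := fun j => ((2 * j).choose j : ℤ) with hf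
  have hsq : (PowerSeries.mk f) ^ 2 = PowerSeries.mk (fun j => (4 : ℤ) ^ j) := SCBP.hsq_lemma
  have hmk4 : (PowerSeries.mk (fun j => (4 : ℤ) ^ j)) =
      PowerSeries.rescale (4 : ℤ) (PowerSeries.mk 1) := by
    ext N
    simp [PowerSeries.coeff_rescale]
  have hone : (PowerSeries.mk (1 : ℕ → ℤ)) ^ t =
      PowerSeries.mk (fun N => ((t - 1 + N).choose (t - 1) : ℤ)) := by
    have h := PowerSeries.mk_one_pow_eq_mk_choose_add ℤ (t - 1)
    rwa [Nat.sub_add_cancel ht1] at h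
  have hcoeff : PowerSeries.coeff (R := ℤ) n ((PowerSeries.mk f) ^ m) =
      (4 : ℤ) ^ n * ((t - 1 + n).choose (t - 1) : ℤ) := by
    rw [htm, pow_mul, hsq, hmk4, ← map_pow, PowerSeries.coeff_rescale, hone,
      PowerSeries.coeff_mk]
  have hchoose : (t - 1 + n).choose (t - 1) = (n + t - 1).choose n := by
    have h1 : t - 1 + n = n + t - 1 := by omega
    have h2 : n + t - 1 - n = t - 1 := by omega
    rw [h1, ← h2, Nat.choose_symm (by omega)]
  have key : ((∑ k ∈ Finset.Nat.antidiagonalTuple m n, ∏ i, (2 * k i).choose (k i) : ℕ) : ℤ)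
      = ((4 ^ n * (n + m / 2 - 1).choose n : ℕ) : ℤ) := by
    push_cast
    rw [SCBP.sum_tuple_eq_coeff f m n, hcoeff, hchoose, hdiv]
  exact_mod_cast key
end

section
/- For every real number p > 0 and every integer n ≥ 1, the (2n)-th moment of the difference of two independent gamma random variables with common shape parameter p satisfies (1/Γ(p)²) · ∫₀^∞ ∫₀^∞ (x − y)^{2n} · e^{−x−y} · (xy)^{p−1} dx dy = (2n)! · Γ(n + p) / (Γ(n + 1) · Γ(p)). -/
open Finset MeasureTheory Set

noncomputable def Gm (m : ℕ) (p q : ℝ) : ℝ :=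
  ∑ k ∈ Finset.range (m+1),
    (-1:ℝ)^k * (m.choose k : ℝ) * Real.Gamma (p + k) * Real.Gamma (q + (m - k : ℕ))

lemma neg_one_pow_sub {m k : ℕ} (h : k ≤ m) : (-1:ℝ)^(m-k) = (-1)^m * (-1)^k := by
  have h1 : (-1:ℝ)^(m-k) * (-1)^k = (-1)^m := by
    rw [← pow_add, Nat.sub_add_cancel h]
  have h2 : (-1:ℝ)^k * (-1)^k = 1 := by
    rw [← pow_add, ← two_mul, pow_mul]; norm_num
  calc (-1:ℝ)^(m-k) = (-1:ℝ)^(m-k) * ((-1)^k * (-1)^k) := by rw [h2, mul_one]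
  _ = (-1)^m * (-1)^k := by rw [← mul_assoc, h1]

lemma neg_one_sq_pow (k : ℕ) : (-1:ℝ)^k * (-1)^k = 1 := by
  rw [← pow_add, ← two_mul, pow_mul]; norm_num

lemma Gm_symm (m : ℕ) (p q : ℝ) : Gm m p q = (-1)^m * Gm m q p := by
  unfold Gm
  rw [Finset.mul_sum, ← Finset.sum_range_reflect]
  refine Finset.sum_congr rfl ?_
  intro k hk
  have hk' : k ≤ m := by have := Finset.mem_range.mp hk; omega
  have e1 : m + 1 - 1 - k = m - k := by omega
  have e2 : m - (m - k) = k := by omega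
  rw [e1, e2, Nat.choose_symm hk', neg_one_pow_sub hk']
  ring

lemma Gm_diag_odd {m : ℕ} (hm : Odd m) (p : ℝ) : Gm m p p = 0 := by
  have h := Gm_symm m p p
  have hneg : (-1:ℝ)^m = -1 := hm.neg_one_pow
  rw [hneg] at h
  linarith

lemma Gm_pascal (m : ℕ) (p q : ℝ) :
    Gm (m+1) p q = Gm m p (q+1) - Gm m (p+1) q := by
  unfold Gm
  rw [Finset.sum_range_succ' _ (m+1)]
  have hstep : ∀ i ∈ Finset.range (m+1),
      (-1:ℝ)^(i+1) * (((m+1).choose (i+1)) : ℝ) * Real.Gamma (p + ↑(i+1)) *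
          Real.Gamma (q + ↑(m + 1 - (i+1)))
        = (-1:ℝ)^(i+1) * ((m.choose (i+1)) : ℝ) * Real.Gamma (p + ↑(i+1)) *
            Real.Gamma (q + ↑(m - i))
          - (-1:ℝ)^i * ((m.choose i) : ℝ) * Real.Gamma ((p+1) + ↑i) *
            Real.Gamma (q + ↑(m - i)) := by
    intro i hi
    have e1 : m + 1 - (i+1) = m - i := by omega
    have e2 : p + ↑(i+1) = (p+1) + (i:ℝ) := by push_cast; ring
    rw [e1, e2, Nat.choose_succ_succ]
    push_cast
    ring
  rw [Finset.sum_congr rfl hstep, Finset.sum_sub_distrib]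
  -- first sum: shift to Gm m p (q+1) minus its 0-term
  have hA : (∑ i ∈ Finset.range (m+1),
      (-1:ℝ)^(i+1) * ((m.choose (i+1)) : ℝ) * Real.Gamma (p + ↑(i+1)) *
        Real.Gamma (q + ↑(m - i)))
      = (∑ k ∈ Finset.range (m+1),
        (-1:ℝ)^k * ((m.choose k) : ℝ) * Real.Gamma (p + ↑k) *
          Real.Gamma ((q+1) + ↑(m - k)))
        - (-1:ℝ)^0 * ((m.choose 0) : ℝ) * Real.Gamma (p + (0:ℕ)) *
          Real.Gamma ((q+1) + ↑(m - 0)) := by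
    have hzero : ((m.choose (m+1)) : ℝ) = 0 := by
      simp [Nat.choose_eq_zero_of_lt]
    rw [Finset.sum_range_succ' (fun k => (-1:ℝ)^k * ((m.choose k) : ℝ) * Real.Gamma (p + ↑k) *
          Real.Gamma ((q+1) + ↑(m - k))) m, Finset.sum_range_succ, hzero]
    have hcong : (∑ i ∈ Finset.range m,
        (-1:ℝ)^(i+1) * ((m.choose (i+1)) : ℝ) * Real.Gamma (p + ↑(i+1)) *
          Real.Gamma (q + ↑(m - i)))
        = ∑ i ∈ Finset.range m,
        (-1:ℝ)^(i+1) * ((m.choose (i+1)) : ℝ) * Real.Gamma (p + ↑(i+1)) *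
          Real.Gamma ((q+1) + ↑(m - (i+1))) := by
      refine Finset.sum_congr rfl ?_
      intro i hi
      have hi' : i < m := Finset.mem_range.mp hi
      have e3 : (q+1) + ((m - (i+1) : ℕ) : ℝ) = q + ((m - i : ℕ) : ℝ) := by
        have : (m - i : ℕ) = (m - (i+1)) + 1 := by omega
        rw [this]; push_cast; ring
      rw [e3]
    rw [hcong]
    ring
  rw [hA]
  have e4 : ((-1:ℝ)^0 * (((m+1).choose 0) : ℝ) * Real.Gamma (p + ↑(0:ℕ)) *
      Real.Gamma (q + ↑(m + 1 - 0)))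
      = (-1:ℝ)^0 * ((m.choose 0) : ℝ) * Real.Gamma (p + (0:ℕ)) *
        Real.Gamma ((q+1) + ↑(m - 0)) := by
    have : q + ((m + 1 - 0 : ℕ) : ℝ) = (q+1) + ((m - 0 : ℕ) : ℝ) := by
      push_cast [Nat.sub_zero]; ring
    rw [this]
    norm_num
  rw [e4]
  ring

lemma Gm_F2 (m : ℕ) (p q : ℝ) (hp : 0 < p) :
    p * Gm m p q = Gm m (p+1) q + m * Gm (m-1) (p+1) q := by
  cases m with
  | zero =>
      have h1 : Real.Gamma (p+1) = p * Real.Gamma p := Real.Gamma_add_one hp.ne'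
      simp [Gm, h1]
      ring
  | succ m =>
      simp only [Nat.add_sub_cancel]
      unfold Gm
      rw [Finset.mul_sum]
      have hstep : ∀ k ∈ Finset.range (m+1+1),
          p * ((-1:ℝ)^k * (((m+1).choose k) : ℝ) * Real.Gamma (p + ↑k) *
            Real.Gamma (q + ↑(m + 1 - k)))
          = ((-1:ℝ)^k * (((m+1).choose k) : ℝ) * Real.Gamma ((p+1) + ↑k) *
              Real.Gamma (q + ↑(m + 1 - k)))
            - ((-1:ℝ)^k * (k:ℝ) * (((m+1).choose k) : ℝ) * Real.Gamma (p + ↑k) *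
              Real.Gamma (q + ↑(m + 1 - k))) := by
        intro k hk
        have e : (p+1) + (k:ℝ) = (p + ↑k) + 1 := by ring
        rw [e, Real.Gamma_add_one (by positivity)]
        ring
      rw [Finset.sum_congr rfl hstep, Finset.sum_sub_distrib]
      have hT : (∑ k ∈ Finset.range (m+1+1),
          (-1:ℝ)^k * (k:ℝ) * (((m+1).choose k) : ℝ) * Real.Gamma (p + ↑k) *
            Real.Gamma (q + ↑(m + 1 - k)))
          = -((m+1:ℕ) : ℝ) * ∑ k ∈ Finset.range (m+1),
              (-1:ℝ)^k * ((m.choose k) : ℝ) * Real.Gamma ((p+1) + ↑k) *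
                Real.Gamma (q + ↑(m - k)) := by
        rw [Finset.sum_range_succ' _ (m+1), Finset.mul_sum]
        simp only [Nat.cast_zero, mul_zero, zero_mul, add_zero]
        refine Finset.sum_congr rfl ?_
        intro i hi
        have hc : ((i+1 : ℕ):ℝ) * (((m+1).choose (i+1)) : ℝ)
            = ((m+1 : ℕ):ℝ) * ((m.choose i) : ℝ) := by
          have h2 : (m+1) * (m.choose i) = ((m+1).choose (i+1)) * (i+1) :=
            Nat.add_one_mul_choose_eq m i
          have h3 : ((i+1) * ((m+1).choose (i+1)) : ℕ) = ((m+1) * m.choose i : ℕ) := by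
            rw [mul_comm]; omega
          exact_mod_cast congrArg (Nat.cast (R := ℝ)) h3
        have e1 : m + 1 - (i+1) = m - i := by omega
        have e2 : p + ((i+1 : ℕ):ℝ) = (p+1) + (i:ℝ) := by push_cast; ring
        rw [e1, e2, pow_succ]
        push_cast at hc ⊢
        linear_combination (-((-1:ℝ)^i * Real.Gamma (p+1+(i:ℝ)) *
          Real.Gamma (q + ((m-i : ℕ):ℝ)))) * hc
      rw [hT]
      ring

lemma Gm_F3 (m : ℕ) (p q : ℝ) (hq : 0 < q) :
    q * Gm m p q = Gm m p (q+1) - m * Gm (m-1) p (q+1) := by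
  cases m with
  | zero =>
      have h1 : Real.Gamma (q+1) = q * Real.Gamma q := Real.Gamma_add_one hq.ne'
      simp [Gm, h1]
      ring
  | succ m =>
      simp only [Nat.add_sub_cancel]
      unfold Gm
      rw [Finset.mul_sum]
      have hstep : ∀ k ∈ Finset.range (m+1+1),
          q * ((-1:ℝ)^k * (((m+1).choose k) : ℝ) * Real.Gamma (p + ↑k) *
            Real.Gamma (q + ↑(m + 1 - k)))
          = ((-1:ℝ)^k * (((m+1).choose k) : ℝ) * Real.Gamma (p + ↑k) *
              Real.Gamma (q + ↑(m + 1 - k) + 1))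
            - ((-1:ℝ)^k * ((m + 1 - k : ℕ):ℝ) * (((m+1).choose k) : ℝ) *
              Real.Gamma (p + ↑k) * Real.Gamma (q + ↑(m + 1 - k))) := by
        intro k hk
        rw [Real.Gamma_add_one (by positivity)]
        ring
      rw [Finset.sum_congr rfl hstep, Finset.sum_sub_distrib]
      have hA : (∑ k ∈ Finset.range (m+1+1),
          (-1:ℝ)^k * (((m+1).choose k) : ℝ) * Real.Gamma (p + ↑k) *
            Real.Gamma (q + ↑(m + 1 - k) + 1))
          = ∑ k ∈ Finset.range (m+1+1),
          (-1:ℝ)^k * (((m+1).choose k) : ℝ) * Real.Gamma (p + ↑k) *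
            Real.Gamma ((q+1) + ↑(m + 1 - k)) := by
        refine Finset.sum_congr rfl ?_
        intro k hk
        have e : q + ((m+1-k : ℕ):ℝ) + 1 = (q+1) + ((m+1-k : ℕ):ℝ) := by ring
        rw [e]
      rw [hA]
      have hT : (∑ k ∈ Finset.range (m+1+1),
          (-1:ℝ)^k * ((m + 1 - k : ℕ):ℝ) * (((m+1).choose k) : ℝ) *
            Real.Gamma (p + ↑k) * Real.Gamma (q + ↑(m + 1 - k)))
          = ((m+1:ℕ) : ℝ) * ∑ k ∈ Finset.range (m+1),
              (-1:ℝ)^k * ((m.choose k) : ℝ) * Real.Gamma (p + ↑k) *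
                Real.Gamma ((q+1) + ↑(m - k)) := by
        rw [Finset.sum_range_succ, Finset.mul_sum]
        have hz : ((m + 1 - (m+1) : ℕ):ℝ) = 0 := by norm_num
        rw [hz]
        simp only [mul_zero, zero_mul, add_zero]
        refine Finset.sum_congr rfl ?_
        intro k hk
        have hk' : k ≤ m := by have := Finset.mem_range.mp hk; omega
        have hc : ((m + 1 - k : ℕ):ℝ) * (((m+1).choose k) : ℝ)
            = ((m+1 : ℕ):ℝ) * ((m.choose k) : ℝ) := by
          have h2 : (m+1) * (m.choose k) = ((m+1).choose (k+1)) * (k+1) :=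
            Nat.add_one_mul_choose_eq m k
          have h3 : ((m+1).choose (k+1)) * (k+1) = ((m+1).choose k) * (m + 1 - k) :=
            Nat.choose_succ_right_eq (m+1) k
          have h4 : ((m + 1 - k) * ((m+1).choose k) : ℕ) = ((m+1) * m.choose k : ℕ) := by
            rw [mul_comm]; omega
          exact_mod_cast congrArg (Nat.cast (R := ℝ)) h4
        have e1 : q + ((m + 1 - k : ℕ):ℝ) = (q+1) + ((m - k : ℕ):ℝ) := by
          have : (m + 1 - k : ℕ) = (m - k) + 1 := by omega
          rw [this]; push_cast; ring
        rw [e1]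
        push_cast at hc ⊢
        linear_combination ((-1:ℝ)^k * Real.Gamma (p+(k:ℝ)) *
          Real.Gamma ((q+1) + ((m-k : ℕ):ℝ))) * hc
      rw [hT]

lemma Gm_diag (n : ℕ) : ∀ p : ℝ, 0 < p →
    Gm (2*n) p p = ((2*n).factorial : ℝ) / (n.factorial : ℝ) *
      Real.Gamma p * Real.Gamma (n + p) := by
  induction n with
  | zero =>
      intro p hp
      simp [Gm]
  | succ n ih =>
      intro p hp
      have hp1 : (0:ℝ) < p + 1 := by linarith
      have hodd1 : Gm (2*n+1) p p = 0 := Gm_diag_odd ⟨n, by ring⟩ p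
      have h1 : Gm (2*n+1+1) p p = Gm (2*n+1) p (p+1) - Gm (2*n+1) (p+1) p :=
        Gm_pascal _ p p
      have hsym : Gm (2*n+1) p (p+1) = - Gm (2*n+1) (p+1) p := by
        have h := Gm_symm (2*n+1) p (p+1)
        rw [Odd.neg_one_pow ⟨n, by ring⟩] at h
        linarith
      have h2 := Gm_F2 (2*n+1) p p hp
      rw [hodd1, mul_zero, Nat.add_sub_cancel] at h2
      have h3 : Gm (2*n+1) (p+1) p = -((2*n+1:ℕ):ℝ) * Gm (2*n) (p+1) p := by
        linarith [h2]
      have h4 := Gm_F3 (2*n) (p+1) p hp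
      have h5 : ((2*n:ℕ):ℝ) * Gm (2*n-1) (p+1) (p+1) = 0 := by
        cases n with
        | zero => norm_num
        | succ k =>
            rw [Gm_diag_odd (by exact ⟨k, by omega⟩) (p+1)]
            ring
      rw [h5] at h4
      have ihp := ih (p+1) hp1
      have hΓ : Real.Gamma (p+1) = p * Real.Gamma p := Real.Gamma_add_one hp.ne'
      have e2 : Real.Gamma ((n:ℝ) + (p+1)) = Real.Gamma (((n+1:ℕ):ℝ) + p) := by
        congr 1; push_cast; ring
      rw [hΓ, e2] at ihp
      have hb : Gm (2*n) (p+1) p = ((2*n).factorial : ℝ) / (n.factorial : ℝ) *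
          Real.Gamma p * Real.Gamma (((n+1:ℕ):ℝ) + p) := by
        have := h4.trans (by rw [ihp, sub_zero]; ring :
          Gm (2*n) (p+1) (p+1) - 0 = p * (((2*n).factorial : ℝ) / (n.factorial : ℝ) *
            Real.Gamma p * Real.Gamma (((n+1:ℕ):ℝ) + p)))
        exact mul_left_cancel₀ hp.ne' this
      have eidx : 2*(n+1) = 2*n+1+1 := by ring
      rw [eidx, h1, hsym, h3, hb]
      have hnat : (2*n+1+1).factorial * n.factorial
          = (2*(2*n+1)) * ((2*n).factorial * (n+1).factorial) := by
        rw [Nat.factorial_succ (2*n+1), Nat.factorial_succ (2*n), Nat.factorial_succ n]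
        ring
      have hnf : (n.factorial : ℝ) ≠ 0 := by exact_mod_cast n.factorial_ne_zero
      have hn1f : ((n+1).factorial : ℝ) ≠ 0 := by exact_mod_cast (n+1).factorial_ne_zero
      have hcoef : ((2*n+1+1).factorial : ℝ) / ((n+1).factorial : ℝ)
          = ((2*(2*n+1) : ℕ):ℝ) * ((2*n).factorial : ℝ) / (n.factorial : ℝ) := by
        rw [div_eq_div_iff hn1f hnf]
        have := congrArg (Nat.cast (R := ℝ)) hnat
        push_cast at this ⊢
        linarith [this]
      rw [hcoef]
      push_cast
      ring

lemma gamma_term_integrable {s : ℝ} (hs : 0 < s) (c : ℝ) :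
    MeasureTheory.IntegrableOn (fun y : ℝ => c * (Real.exp (-y) * y ^ (s - 1)))
      (Set.Ioi 0) := by
  exact (Real.GammaIntegral_convergent hs).const_mul c

lemma inner_integral_eq (p : ℝ) (hp : 0 < p) (n : ℕ) {x : ℝ} (hx : 0 < x) :
    (∫ y in Set.Ioi (0:ℝ), (x - y)^(2*n) * Real.exp (-x - y) * (x*y)^(p-1))
    = ∑ k ∈ Finset.range (2*n+1),
        ((-1:ℝ)^k * (((2*n).choose k) : ℝ) * Real.Gamma (p + ((2*n - k : ℕ):ℝ)))
          * (Real.exp (-x) * x ^ ((p + (k:ℕ)) - 1)) := by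
  have hcong : Set.EqOn
      (fun y : ℝ => (x - y)^(2*n) * Real.exp (-x - y) * (x*y)^(p-1))
      (fun y : ℝ => ∑ k ∈ Finset.range (2*n+1),
        ((-1:ℝ)^k * (((2*n).choose k) : ℝ) * (Real.exp (-x) * x ^ ((p + (k:ℕ)) - 1)))
          * (Real.exp (-y) * y ^ ((p + ((2*n - k : ℕ):ℝ)) - 1)))
      (Set.Ioi 0) := by
    intro y hy
    have hy' : (0:ℝ) < y := hy
    simp only
    rw [show x - y = x + (-y) by ring, add_pow, Finset.sum_mul, Finset.sum_mul]
    refine Finset.sum_congr rfl ?_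
    intro k hk
    have hk' : k ≤ 2*n := by have := Finset.mem_range.mp hk; omega
    have hxk : x^k * x^(p-1) = x^((p + (k:ℕ)) - 1) := by
      rw [← Real.rpow_natCast x k, ← Real.rpow_add hx]
      congr 1
      ring
    have hyk : y^(2*n-k) * y^(p-1) = y^((p + ((2*n - k : ℕ):ℝ)) - 1) := by
      rw [← Real.rpow_natCast y (2*n-k), ← Real.rpow_add hy']
      congr 1
      ring
    have hneg : (-y)^(2*n-k) = (-1:ℝ)^(2*n-k) * y^(2*n-k) := by
      rw [neg_pow]
    have hsgn : (-1:ℝ)^(2*n-k) = (-1:ℝ)^k := by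
      rw [neg_one_pow_sub hk']
      have : (-1:ℝ)^(2*n) = 1 := by
        rw [pow_mul]; norm_num
      rw [this, one_mul]
    rw [show -x - y = -x + -y by ring, Real.exp_add, Real.mul_rpow hx.le hy'.le,
      hneg, hsgn]
    rw [← hxk, ← hyk]
    ring
  rw [MeasureTheory.setIntegral_congr_fun measurableSet_Ioi hcong]
  rw [MeasureTheory.integral_finset_sum]
  · refine Finset.sum_congr rfl ?_
    intro k hk
    rw [MeasureTheory.integral_const_mul, ← Real.Gamma_eq_integral (by positivity :
      (0:ℝ) < p + ((2*n - k : ℕ):ℝ))]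
    ring
  · intro k hk
    exact gamma_term_integrable (by positivity) _

theorem even_moment_diff_of_gammas (p : ℝ) (hp : 0 < p) (n : ℕ) (hn : 1 ≤ n) :
    (1 / Real.Gamma p ^ 2) *
      ∫ x in Set.Ioi (0 : ℝ), ∫ y in Set.Ioi (0 : ℝ),
        (x - y) ^ (2 * n) * Real.exp (-x - y) * (x * y) ^ (p - 1) =
      ((2 * n).factorial : ℝ) * Real.Gamma (n + p) /
        (Real.Gamma ((n : ℝ) + 1) * Real.Gamma p) := by
  have hΓp : 0 < Real.Gamma p := Real.Gamma_pos_of_pos hp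
  have houter : (∫ x in Set.Ioi (0:ℝ), ∫ y in Set.Ioi (0:ℝ),
      (x-y)^(2*n) * Real.exp (-x-y) * (x*y)^(p-1)) = Gm (2*n) p p := by
    have hcong : Set.EqOn
        (fun x : ℝ => ∫ y in Set.Ioi (0:ℝ),
          (x-y)^(2*n) * Real.exp (-x-y) * (x*y)^(p-1))
        (fun x : ℝ => ∑ k ∈ Finset.range (2*n+1),
          ((-1:ℝ)^k * (((2*n).choose k):ℝ) * Real.Gamma (p + ((2*n-k:ℕ):ℝ)))
            * (Real.exp (-x) * x ^ ((p + (k:ℕ)) - 1)))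
        (Set.Ioi 0) := fun x hx => inner_integral_eq p hp n hx
    rw [MeasureTheory.setIntegral_congr_fun measurableSet_Ioi hcong,
      MeasureTheory.integral_finset_sum _
        (fun k _ => gamma_term_integrable (by positivity) _)]
    unfold Gm
    refine Finset.sum_congr rfl ?_
    intro k hk
    rw [MeasureTheory.integral_const_mul,
      ← Real.Gamma_eq_integral (by positivity : (0:ℝ) < p + (k:ℕ))]
    ring
  rw [houter, Gm_diag n p hp, Real.Gamma_nat_eq_factorial]
  have hnf : (n.factorial:ℝ) ≠ 0 := by exact_mod_cast n.factorial_ne_zero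
  field_simp
end
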